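/- Let p, q be coprime positive integers with pq | n. In the polynomial ring ℂ[z_0,...,z_{n_p - 1}, w_0,...,w_{n_q - 1}], consider the ring homomorphism ρ' to ℂ[x_0,...,x_{n-1}] sending z_i ↦ Θ_p(y^(p)_i) and w_j ↦ Θ_q(y^(q)_j). Then Ker(ρ') is the ideal generated by t_i := Π_{j=0}^{q-1} z_{i + n_{pq} j} − Π_{j=0}^{p-1} w_{i + n_{pq} j} for 0 ≤ i ≤ n_{pq} − 1. -/

import Mathlib

open MvPolynomial
open Fin.NatCast

/-- The variable `y^(d)_{i,j} = ∑_{l<n/d} ζ^{i(j+dl)} x_{j+dl}`. -/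
noncomputable def ypVar (n d : ℕ) [NeZero n] (ζ : ℂ) (i j : ℕ) :
    MvPolynomial (ZMod n) ℂ :=
  ∑ l ∈ Finset.range (n / d), C (ζ ^ (i * (j + d * l))) * X ((j + d * l : ℕ) : ZMod n)

/-- The circulant determinant of order `d` with first column `a_0, …, a_{d-1}`. -/
def thetaCirc {R : Type*} [CommRing R] (d : ℕ) (a : ℕ → R) : R :=
  (Matrix.circulant fun j : Fin d => a (j : ℕ)).det

/-!
The substitution `x_k ↦ u_k = ∑_t ζ^{kt} x_t` is invertible (its matrix is a Vandermonde matrix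
in the distinct powers of `ζ`) and diagonalises every circulant: `Θ_d(y^(d)_i)` becomes
`∏_{m<d} u_{i + n_d m}`. Hence `ρ'` is this automorphism after the monomial map
`z_i ↦ ∏_{m<p} x_{i + n_p m}`, `w_j ↦ ∏_{m<q} x_{j + n_q m}`, and both have the same kernel.

Under the monomial map the exponent of `x_k` in the image of `z^α w^β` is
`α_{k mod n_p} + β_{k mod n_q}`. As `gcd(n_p, n_q) = n_{pq}`, the Chinese remainder theorem shows
that all pairs of indices congruent mod `n_{pq}` occur, so the map is injective on monomials in
which every class mod `n_{pq}` contains a vanishing `z`-exponent. Modulo the `t_i`, which lie in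
the kernel, every monomial reduces to such a monomial by lowering its `z`-degree.
-/

open Finset

theorem Matrix.det_circulant_eq_prod {A : Type*} [CommRing A] [IsDomain A] {d : ℕ} {ω : A}
    (hω : IsPrimitiveRoot ω d) (a : Fin d → A) :
    (Matrix.circulant a).det = ∏ m : Fin d, ∑ j : Fin d, ω ^ ((m : ℕ) * j) * a j := by
  obtain _ | d := d
  · simp
  set V := Matrix.vandermonde fun m : Fin (d + 1) => ω ^ (m : ℕ)
  have hV : V.det ≠ 0 := det_vandermonde_ne_zero_iff.mpr fun i j h =>
    Fin.ext (hω.pow_inj i.isLt j.isLt h)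
  -- row `m` of `V` is a left eigenvector of every circulant
  have hVC : V * circulant a
      = diagonal (fun m : Fin (d + 1) => ∑ j : Fin (d + 1), ω ^ ((m : ℕ) * j) * a j) * V := by
    ext m k
    have hper : (ω ^ (m : ℕ)) ^ (d + 1) = 1 := by
      rw [← pow_mul, mul_comm, pow_mul, hω.pow_eq_one, one_pow]
    rw [mul_apply, diagonal_mul, Finset.sum_mul, ← Equiv.sum_comp (Equiv.addRight k)]
    refine Finset.sum_congr rfl fun j _ => ?_
    simp only [V, vandermonde_apply, circulant_apply, Equiv.coe_addRight, add_sub_cancel_right,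
      Fin.val_add, ← pow_eq_pow_mod _ hper, pow_add, pow_mul]
    ring
  have := congrArg det hVC
  rw [det_mul, det_mul, det_diagonal, mul_comm] at this
  exact mul_right_cancel₀ hV this

namespace MvPolynomial

variable {R σ τ : Type*} [CommRing R]

section LinearSubst

variable [Fintype σ]

noncomputable def linearSubst (M : Matrix σ σ R) :
    MvPolynomial σ R →ₐ[R] MvPolynomial σ R :=
  aeval fun k => ∑ t, C (M k t) * X t

theorem linearSubst_X (M : Matrix σ σ R) (k : σ) :
    linearSubst M (X k) = ∑ t, C (M k t) * X t :=
  aeval_X _ _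

theorem linearSubst_comp (M N : Matrix σ σ R) :
    (linearSubst N).comp (linearSubst M) = linearSubst (M * N) := by
  refine algHom_ext fun k => ?_
  simp only [AlgHom.comp_apply, linearSubst_X, map_sum, map_mul, algHom_C, Finset.mul_sum]
  simp only [Matrix.mul_apply, map_sum, Finset.sum_mul, ← mul_assoc, C_mul]
  exact Finset.sum_comm

theorem linearSubst_one [DecidableEq σ] : linearSubst (1 : Matrix σ σ R) = AlgHom.id R _ := by
  refine algHom_ext fun k => ?_
  simp [linearSubst_X, Matrix.one_apply]

theorem linearSubst_injective [DecidableEq σ] {M : Matrix σ σ R} (hM : IsUnit M.det) :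
    Function.Injective (linearSubst M) := by
  refine Function.LeftInverse.injective (g := linearSubst M⁻¹) fun F => ?_
  rw [← AlgHom.comp_apply, linearSubst_comp, Matrix.mul_nonsing_inv M hM, linearSubst_one,
    AlgHom.id_apply]

end LinearSubst

theorem aeval_monomial_monomial (e : σ → τ →₀ ℕ) (a : σ →₀ ℕ) (c : R) :
    aeval (fun s => monomial (e s) (1 : R)) (monomial a c)
      = monomial (Finsupp.linearCombination ℕ e a) c := by
  simp only [aeval_monomial, monomial_pow, one_pow, Finsupp.linearCombination_apply,
    monomial_finsupp_sum_index, algebraMap_eq]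

theorem coeff_aeval_monomial_of_injOn (e : σ → τ →₀ ℕ) {S : Set (σ →₀ ℕ)}
    (hS : S.InjOn (Finsupp.linearCombination ℕ e)) {G : MvPolynomial σ R}
    (hG : ↑G.support ⊆ S) {b : σ →₀ ℕ} (hb : b ∈ S) :
    coeff (Finsupp.linearCombination ℕ e b) (aeval (fun s => monomial (e s) (1 : R)) G)
      = coeff b G := by
  classical
  conv_lhs => rw [G.as_sum]
  simp only [map_sum, coeff_sum, aeval_monomial_monomial, coeff_monomial]
  rw [sum_eq_single b (fun b' hb' hne => if_neg fun h => hne (hS (hG hb') hb h))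
    (fun hb' => by rw [if_pos rfl, notMem_support_iff.mp hb']), if_pos rfl]

theorem eq_zero_of_aeval_monomial_eq_zero (e : σ → τ →₀ ℕ) {S : Set (σ →₀ ℕ)}
    (hS : S.InjOn (Finsupp.linearCombination ℕ e)) {G : MvPolynomial σ R}
    (hG : ↑G.support ⊆ S) (h : aeval (fun s => monomial (e s) (1 : R)) G = 0) : G = 0 := by
  by_contra hne
  obtain ⟨b, hb⟩ := support_nonempty.mpr hne
  apply mem_support_iff.mp hb
  rw [← coeff_aeval_monomial_of_injOn e hS hG (hG hb), h, coeff_zero]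

theorem exists_monomial_sub_mem_of_weight_lt {ι : Type*} {I : Ideal (MvPolynomial σ R)}
    {u v : ι → σ →₀ ℕ} (huv : ∀ i, monomial (u i) (1 : R) - monomial (v i) 1 ∈ I)
    (w : (σ →₀ ℕ) →+ ℕ) (hw : ∀ i, w (v i) < w (u i)) (a : σ →₀ ℕ) :
    ∃ b, (∀ i, ¬ u i ≤ b) ∧ monomial a (1 : R) - monomial b 1 ∈ I := by
  induction hk : w a using Nat.strong_induction_on generalizing a with
  | _ k ih =>
    by_cases h : ∃ i, u i ≤ a
    · obtain ⟨i, hi⟩ := h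
      obtain ⟨c, rfl⟩ := exists_add_of_le hi
      have hlt : w (v i + c) < k := by rw [← hk, map_add, map_add]; linarith [hw i]
      obtain ⟨b, hb, hcb⟩ := ih _ hlt (v i + c) rfl
      have hstep : monomial (u i + c) (1 : R) - monomial (v i + c) 1
          = monomial c 1 * (monomial (u i) 1 - monomial (v i) 1) := by
        rw [mul_sub, monomial_mul, monomial_mul, one_mul, add_comm c, add_comm c]
      refine ⟨b, hb, ?_⟩
      rw [← sub_add_sub_cancel _ (monomial (v i + c) 1), hstep]
      exact I.add_mem (I.mul_mem_left _ (huv i)) hcb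
    · push Not at h
      exact ⟨a, h, by rw [sub_self]; exact I.zero_mem⟩

theorem exists_support_subset_sub_mem {S : Set (σ →₀ ℕ)} {I : Ideal (MvPolynomial σ R)}
    (hred : ∀ a, ∃ b ∈ S, monomial a (1 : R) - monomial b 1 ∈ I) (F : MvPolynomial σ R) :
    ∃ G : MvPolynomial σ R, ↑G.support ⊆ S ∧ F - G ∈ I := by
  classical
  induction F using MvPolynomial.induction_on' with
  | monomial a c =>
    obtain ⟨b, hb, hab⟩ := hred a
    refine ⟨monomial b c,
      fun x hx => Finset.mem_singleton.mp (support_monomial_subset hx) ▸ hb, ?_⟩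
    have : monomial a c - monomial b c = C c * (monomial a (1 : R) - monomial b 1) := by
      rw [mul_sub, C_mul_monomial, C_mul_monomial, mul_one]
    exact this ▸ I.mul_mem_left _ hab
  | add F₁ F₂ ih₁ ih₂ =>
    obtain ⟨G₁, hG₁, hFG₁⟩ := ih₁
    obtain ⟨G₂, hG₂, hFG₂⟩ := ih₂
    refine ⟨G₁ + G₂, (Finset.coe_subset.mpr support_add).trans ?_, ?_⟩
    · rw [Finset.coe_union]
      exact Set.union_subset hG₁ hG₂
    · rw [add_sub_add_comm]
      exact I.add_mem hFG₁ hFG₂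

theorem ker_aeval_monomial_eq (e : σ → τ →₀ ℕ) {S : Set (σ →₀ ℕ)}
    (hS : S.InjOn (Finsupp.linearCombination ℕ e)) {I : Ideal (MvPolynomial σ R)}
    (hI : I ≤ RingHom.ker (aeval fun s => monomial (e s) (1 : R)))
    (hred : ∀ a, ∃ b ∈ S, monomial a (1 : R) - monomial b 1 ∈ I) :
    RingHom.ker (aeval fun s => monomial (e s) (1 : R)) = I := by
  refine le_antisymm (fun F hF => ?_) hI
  obtain ⟨G, hG, hFG⟩ := exists_support_subset_sub_mem hred F
  have hG0 : G = 0 := by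
    refine eq_zero_of_aeval_monomial_eq_zero e hS hG ?_
    rw [← sub_sub_cancel F G, map_sub, RingHom.mem_ker.mp hF, RingHom.mem_ker.mp (hI hFG),
      sub_zero]
  rwa [hG0, sub_zero] at hFG

end MvPolynomial

theorem IsPrimitiveRoot.pow_eq_pow_of_natCast_eq {M : Type*} [CommMonoid M] {ζ : M} {n : ℕ}
    (hζ : IsPrimitiveRoot ζ n) {a b : ℕ} (h : (a : ZMod n) = b) : ζ ^ a = ζ ^ b := by
  rw [pow_eq_pow_mod a hζ.pow_eq_one, pow_eq_pow_mod b hζ.pow_eq_one,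
    (ZMod.natCast_eq_natCast_iff' _ _ _).mp h]

theorem ZMod.sum_univ_eq_sum_range_add_mul {M : Type*} [AddCommMonoid M] {n d : ℕ} [NeZero n]
    (hd : d ∣ n) (g : ZMod n → M) :
    ∑ t, g t = ∑ j ∈ range d, ∑ l ∈ range (n / d), g ((j + d * l : ℕ) : ZMod n) := by
  have hd0 : 0 < d := Nat.pos_of_dvd_of_pos hd (Nat.pos_of_ne_zero (NeZero.ne n))
  rw [← sum_product']
  symm
  refine sum_nbij' (fun x => ((x.1 + d * x.2 : ℕ) : ZMod n)) (fun t => (t.val % d, t.val / d))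
    (by simp) (fun t _ => ?_) (fun x hx => ?_) (fun t _ => ?_) (by simp)
  · simp only [mem_product, mem_range]
    exact ⟨Nat.mod_lt _ hd0, Nat.div_lt_div_of_lt_of_dvd hd (ZMod.val_lt t)⟩
  · simp only [mem_product, mem_range] at hx
    have hlt : x.1 + d * x.2 < n := by
      calc x.1 + d * x.2 < d * (x.2 + 1) := by nlinarith
        _ ≤ d * (n / d) := Nat.mul_le_mul_left d hx.2
        _ = n := Nat.mul_div_cancel' hd
    simp only [ZMod.val_natCast, Nat.mod_eq_of_lt hlt, Nat.add_mul_mod_self_left,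
      Nat.mod_eq_of_lt hx.1, Nat.add_mul_div_left _ _ hd0, Nat.div_eq_of_lt hx.1, zero_add]
  · simp [Nat.mod_add_div]

noncomputable def dftMatrix {K : Type*} [Field K] (n : ℕ) (ζ : K) : Matrix (ZMod n) (ZMod n) K :=
  Matrix.of fun k t => ζ ^ (k.val * t.val)

theorem det_dftMatrix_ne_zero {K : Type*} [Field K] {n : ℕ} [NeZero n] {ζ : K}
    (hζ : IsPrimitiveRoot ζ n) : (dftMatrix n ζ).det ≠ 0 := by
  obtain ⟨m, rfl⟩ := Nat.exists_eq_succ_of_ne_zero (NeZero.ne n)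
  have : dftMatrix (m + 1) ζ = Matrix.vandermonde fun k : Fin (m + 1) => ζ ^ (k : ℕ) := by
    ext k t
    simp [dftMatrix, pow_mul]
    rfl
  rw [this]
  exact Matrix.det_vandermonde_ne_zero_iff.mpr fun i j h => Fin.ext (hζ.pow_inj i.isLt j.isLt h)

theorem sum_pow_mul_ypVar {n d : ℕ} [NeZero n] {ζ : ℂ} (hζ : IsPrimitiveRoot ζ n)
    (hd : d ∣ n) (i m : ℕ) :
    ∑ j ∈ range d, C (ζ ^ (n / d)) ^ (m * j) * ypVar n d ζ i j
      = linearSubst (dftMatrix n ζ) (X ((i + n / d * m : ℕ) : ZMod n)) := by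
  have hn : ((n / d : ℕ) : ZMod n) * d = 0 := by
    rw [← Nat.cast_mul, Nat.div_mul_cancel hd, ZMod.natCast_self]
  rw [linearSubst_X, ZMod.sum_univ_eq_sum_range_add_mul hd]
  refine sum_congr rfl fun j _ => ?_
  rw [ypVar, mul_sum]
  refine sum_congr rfl fun l _ => ?_
  rw [← mul_assoc, ← map_pow, ← map_mul, ← pow_mul, ← pow_add, dftMatrix, Matrix.of_apply]
  congr 2
  -- compare exponents in `ZMod n`, where `(n / d) * d = 0`
  apply hζ.pow_eq_pow_of_natCast_eq
  push_cast [ZMod.natCast_val, ZMod.cast_id', id]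
  linear_combination (-(m * l : ZMod n)) * hn

theorem thetaCirc_ypVar {n d : ℕ} [NeZero n] {ζ : ℂ} (hζ : IsPrimitiveRoot ζ n)
    (hd : d ∣ n) (i : ℕ) :
    thetaCirc d (fun j => ypVar n d ζ i j)
      = ∏ m ∈ range d, linearSubst (dftMatrix n ζ) (X ((i + n / d * m : ℕ) : ZMod n)) := by
  have hω : IsPrimitiveRoot (C (ζ ^ (n / d)) : MvPolynomial (ZMod n) ℂ) d :=
    (hζ.pow (Nat.pos_of_ne_zero (NeZero.ne n)) (Nat.div_mul_cancel hd).symm).map_of_injective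
      (C_injective _ _)
  rw [thetaCirc, Matrix.det_circulant_eq_prod hω, ← Fin.prod_univ_eq_prod_range]
  refine Fintype.prod_congr _ _ fun m => ?_
  rw [← sum_pow_mul_ypVar hζ hd, ← Fin.sum_univ_eq_sum_range]

theorem Finsupp.sum_range_single_add_mul_apply {T : Type*} {e d : ℕ} (hd : 0 < d) (g : ℕ → T)
    (hg : ∀ a b, g a = g b ↔ a % (e * d) = b % (e * d)) {i : ℕ} (hi : i < e) (x : ℕ) :
    (∑ j ∈ range d, Finsupp.single (g (i + e * j)) 1) (g x) = if x % e = i then 1 else 0 := by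
  classical
  have he : 0 < e := by omega
  have hy : x % (e * d) < e * d := Nat.mod_lt _ (Nat.mul_pos he hd)
  have hterm : ∀ j ∈ range d, Finsupp.single (g (i + e * j)) 1 (g x)
      = if x % (e * d) / e = j then (if x % (e * d) % e = i then 1 else 0) else 0 := by
    intro j hj
    have hlt : i + e * j < e * d := by
      have := mem_range.mp hj
      calc i + e * j < e * (j + 1) := by rw [mul_add, mul_one]; omega
        _ ≤ e * d := Nat.mul_le_mul_left e this
    simp only [Finsupp.single_apply, hg, Nat.mod_eq_of_lt hlt, ← ite_and]
    congr 1
    rw [Nat.div_mod_unique he]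
    simp only [hi, and_true, eq_comm (a := i + e * j)]
  rw [Finsupp.finsetSum_apply, Finset.sum_congr rfl hterm, Finset.sum_ite_eq,
    if_pos (mem_range.mpr (Nat.div_lt_of_lt_mul hy)), Nat.mod_mod_of_dvd x (dvd_mul_right e d)]

theorem Nat.exists_mod_mul_eq_of_mod_eq {N p q : ℕ} (hco : Nat.Coprime p q) {v w : ℕ}
    (hv : v < N * q) (hw : w < N * p) (h : v % N = w % N) :
    ∃ x, x % (N * q) = v ∧ x % (N * p) = w := by
  have hgcd : Nat.gcd (N * q) (N * p) = N := by
    rw [Nat.gcd_mul_left, Nat.Coprime.gcd_eq_one hco.symm, mul_one]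
  obtain ⟨x, hxv, hxw⟩ := Nat.chineseRemainder' (n := N * q) (m := N * p) (hgcd ▸ h)
  exact ⟨x, Eq.trans hxv (Nat.mod_eq_of_lt hv), Eq.trans hxw (Nat.mod_eq_of_lt hw)⟩

theorem Fin.sum_mul_ite_mod_eq {m : ℕ} [NeZero m] (f : Fin m → ℕ) (x : ℕ) :
    ∑ i, f i * (if x % m = i then 1 else 0) = f x := by
  have hx : ∀ i : Fin m, x % m = i ↔ (x : Fin m) = i := fun i => by
    rw [Fin.ext_iff, Fin.val_natCast]
  simp only [hx, mul_ite, mul_one, mul_zero, Fintype.sum_ite_eq]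

section MonomialMap

variable {n N p q np nq : ℕ}

noncomputable def fiberExp (n p q np nq : ℕ) : Fin np ⊕ Fin nq → ZMod n →₀ ℕ :=
  Sum.elim (fun i => ∑ m ∈ range p, Finsupp.single ((i + np * m : ℕ) : ZMod n) 1)
    (fun j => ∑ m ∈ range q, Finsupp.single ((j + nq * m : ℕ) : ZMod n) 1)

theorem linearCombination_fiberExp_apply [NeZero np] [NeZero nq] (hp : 0 < p) (hq : 0 < q)
    (hpn : np * p = n) (hqn : nq * q = n) (a : Fin np ⊕ Fin nq →₀ ℕ) (x : ℕ) :
    Finsupp.linearCombination ℕ (fiberExp n p q np nq) a x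
      = a (.inl (x : Fin np)) + a (.inr (x : Fin nq)) := by
  have hx : ∀ {e d : ℕ}, 0 < d → e * d = n → ∀ i < e,
      (∑ m ∈ range d, Finsupp.single ((i + e * m : ℕ) : ZMod n) 1) x
        = if x % e = i then 1 else 0 := fun hd hed i hi =>
    Finsupp.sum_range_single_add_mul_apply hd _
      (fun a b => hed ▸ ZMod.natCast_eq_natCast_iff' a b _) hi x
  rw [Finsupp.linearCombination_apply, Finsupp.sum_fintype _ _ (by simp),
    Fintype.sum_sum_type, Finsupp.add_apply, Finsupp.finsetSum_apply, Finsupp.finsetSum_apply]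
  simp only [Finsupp.smul_apply, smul_eq_mul, fiberExp, Sum.elim_inl, Sum.elim_inr]
  simp only [fun i : Fin np => hx hp hpn i i.isLt, fun j : Fin nq => hx hq hqn j j.isLt]
  rw [Fin.sum_mul_ite_mod_eq (fun i => a (.inl i)), Fin.sum_mul_ite_mod_eq (fun j => a (.inr j))]

noncomputable def zExp (N q np nq r : ℕ) [NeZero np] : Fin np ⊕ Fin nq →₀ ℕ :=
  ∑ j ∈ range q, Finsupp.single (.inl ((r + N * j : ℕ) : Fin np)) 1

noncomputable def wExp (N p np nq r : ℕ) [NeZero nq] : Fin np ⊕ Fin nq →₀ ℕ :=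
  ∑ j ∈ range p, Finsupp.single (.inr ((r + N * j : ℕ) : Fin nq)) 1

theorem zExp_apply_inl [NeZero np] (hq : 0 < q) (hnp : np = N * q) {r : ℕ} (hr : r < N)
    (v : Fin np) :
    zExp N q np nq r (.inl v) = if (v : ℕ) % N = r then 1 else 0 := by
  have := Finsupp.sum_range_single_add_mul_apply hq
    (fun k => (.inl (k : Fin np) : Fin np ⊕ Fin nq))
    (fun a b => by rw [Sum.inl.injEq, Fin.ext_iff, Fin.val_natCast, Fin.val_natCast, hnp]) hr v
  rwa [Fin.cast_val_eq_self] at this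

theorem zExp_apply_inr [NeZero np] (r : ℕ) (w : Fin nq) : zExp N q np nq r (.inr w) = 0 := by
  simp [zExp, Finsupp.finsetSum_apply]

theorem wExp_apply_inl [NeZero nq] (r : ℕ) (v : Fin np) : wExp N p np nq r (.inl v) = 0 := by
  simp [wExp, Finsupp.finsetSum_apply]

theorem wExp_apply_inr [NeZero nq] (hp : 0 < p) (hnq : nq = N * p) {r : ℕ} (hr : r < N)
    (w : Fin nq) :
    wExp N p np nq r (.inr w) = if (w : ℕ) % N = r then 1 else 0 := by
  have := Finsupp.sum_range_single_add_mul_apply hp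
    (fun k => (.inr (k : Fin nq) : Fin np ⊕ Fin nq))
    (fun a b => by rw [Sum.inr.injEq, Fin.ext_iff, Fin.val_natCast, Fin.val_natCast, hnq]) hr w
  rwa [Fin.cast_val_eq_self] at this

theorem weight_zExp [NeZero np] (r : ℕ) :
    Finsupp.weight (Sum.elim (1 : Fin np → ℕ) 0) (zExp N q np nq r) = q := by
  simp [zExp, Finsupp.weight_single]

theorem weight_wExp [NeZero nq] (r : ℕ) :
    Finsupp.weight (Sum.elim (1 : Fin np → ℕ) 0) (wExp N p np nq r) = 0 := by
  simp [wExp, Finsupp.weight_single]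

theorem exists_apply_inl_eq_zero_of_not_zExp_le [NeZero np] (hq : 0 < q) (hnp : np = N * q)
    {r : ℕ} (hr : r < N) {b : Fin np ⊕ Fin nq →₀ ℕ} (h : ¬ zExp N q np nq r ≤ b) :
    ∃ v : Fin np, (v : ℕ) % N = r ∧ b (.inl v) = 0 := by
  rw [Finsupp.le_def] at h
  push Not at h
  obtain ⟨v | w, hlt⟩ := h
  · rw [zExp_apply_inl hq hnp hr] at hlt
    split_ifs at hlt with hv
    exacts [⟨v, hv, Nat.lt_one_iff.mp hlt⟩, absurd hlt (Nat.not_lt_zero _)]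
  · rw [zExp_apply_inr] at hlt
    exact absurd hlt (Nat.not_lt_zero _)

theorem linearCombination_zExp_eq_wExp [NeZero n] [NeZero np] [NeZero nq] (hp : 0 < p)
    (hq : 0 < q) (hnp : np = N * q) (hnq : nq = N * p) (hn : N * p * q = n) {r : ℕ} (hr : r < N) :
    Finsupp.linearCombination ℕ (fiberExp n p q np nq) (zExp N q np nq r)
      = Finsupp.linearCombination ℕ (fiberExp n p q np nq) (wExp N p np nq r) := by
  have hnp' : np * p = n := by rw [hnp, ← hn]; ring
  have hnq' : nq * q = n := by rw [hnq, hn]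
  ext x
  rw [← ZMod.natCast_zmod_val x, linearCombination_fiberExp_apply hp hq hnp' hnq',
    linearCombination_fiberExp_apply hp hq hnp' hnq', zExp_apply_inl hq hnp hr, zExp_apply_inr,
    wExp_apply_inl, wExp_apply_inr hp hnq hr, Fin.val_natCast, Fin.val_natCast,
    Nat.mod_mod_of_dvd _ (hnp ▸ dvd_mul_right N q),
    Nat.mod_mod_of_dvd _ (hnq ▸ dvd_mul_right N p),
    add_zero, zero_add]

theorem injOn_linearCombination_fiberExp [NeZero np] [NeZero nq] (hco : Nat.Coprime p q)
    (hp : 0 < p) (hq : 0 < q) (hnp : np = N * q) (hnq : nq = N * p) (hn : N * p * q = n) :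
    Set.InjOn (Finsupp.linearCombination ℕ (fiberExp n p q np nq))
      {b | ∀ r : Fin N, ¬ zExp N q np nq r ≤ b} := by
  have hN : 0 < N := Nat.pos_of_ne_zero fun h => NeZero.ne np (by rw [hnp, h, zero_mul])
  intro a ha b hb hab
  have hsum : ∀ (v : Fin np) (w : Fin nq), (v : ℕ) % N = w % N →
      a (.inl v) + a (.inr w) = b (.inl v) + b (.inr w) := by
    intro v w hvw
    obtain ⟨x, hxv, hxw⟩ :=
      Nat.exists_mod_mul_eq_of_mod_eq hco (hnp ▸ v.isLt) (hnq ▸ w.isLt) hvw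
    have hx := DFunLike.congr_fun hab (x : ZMod n)
    have hv : (x : Fin np) = v := Fin.ext (by rw [Fin.val_natCast]; exact hnp ▸ hxv)
    have hw : (x : Fin nq) = w := Fin.ext (by rw [Fin.val_natCast]; exact hnq ▸ hxw)
    rwa [linearCombination_fiberExp_apply hp hq (by rw [hnp, ← hn]; ring) (by rw [hnq, hn]),
      linearCombination_fiberExp_apply hp hq (by rw [hnp, ← hn]; ring) (by rw [hnq, hn]),
      hv, hw] at hx
  -- comparing at a `z`-index in the class of `w` where `a` vanishes, and at one where `b`
  -- vanishes, gives both inequalities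
  have hinr : ∀ w : Fin nq, a (.inr w) = b (.inr w) := by
    intro w
    have hr : (w : ℕ) % N < N := Nat.mod_lt _ hN
    obtain ⟨v₁, hv₁, ha₁⟩ :=
      exists_apply_inl_eq_zero_of_not_zExp_le hq hnp hr (ha ⟨_, hr⟩)
    obtain ⟨v₂, hv₂, hb₂⟩ :=
      exists_apply_inl_eq_zero_of_not_zExp_le hq hnp hr (hb ⟨_, hr⟩)
    have h₁ := hsum v₁ w hv₁
    have h₂ := hsum v₂ w hv₂
    omega
  ext (v | w)
  · have hlt : (v : ℕ) % N < nq :=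
      (Nat.mod_lt _ hN).trans_le (hnq ▸ Nat.le_mul_of_pos_right N hp)
    have h := hsum v ((v % N : ℕ) : Fin nq)
      (by rw [Fin.val_natCast, Nat.mod_eq_of_lt hlt, Nat.mod_mod])
    have := hinr ((v % N : ℕ) : Fin nq)
    omega
  · exact hinr w

theorem ker_aeval_fiberExp [NeZero n] [NeZero np] [NeZero nq] {R : Type*} [CommRing R]
    (hco : Nat.Coprime p q) (hp : 0 < p) (hq : 0 < q) (hnp : np = N * q) (hnq : nq = N * p)
    (hn : N * p * q = n) :
    RingHom.ker (aeval fun s => monomial (fiberExp n p q np nq s) (1 : R))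
      = Ideal.span ((fun r => monomial (zExp N q np nq r) (1 : R) - monomial (wExp N p np nq r) 1)
          '' Set.Iio N) := by
  set I := Ideal.span ((fun r => monomial (zExp N q np nq r) (1 : R)
    - monomial (wExp N p np nq r) 1) '' Set.Iio N)
  have hgen : ∀ r : Fin N,
      monomial (zExp N q np nq r) (1 : R) - monomial (wExp N p np nq r) 1 ∈ I :=
    fun r => Ideal.subset_span ⟨r, r.isLt, rfl⟩
  refine ker_aeval_monomial_eq _ (injOn_linearCombination_fiberExp hco hp hq hnp hnq hn) ?_
    fun a => ?_
  · rw [Ideal.span_le]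
    rintro _ ⟨r, hr, rfl⟩
    rw [SetLike.mem_coe, RingHom.mem_ker, map_sub, aeval_monomial_monomial,
      aeval_monomial_monomial, linearCombination_zExp_eq_wExp hp hq hnp hnq hn hr, sub_self]
  · obtain ⟨b, hb, hab⟩ := exists_monomial_sub_mem_of_weight_lt hgen
      (Finsupp.weight (Sum.elim (1 : Fin np → ℕ) 0))
      (fun r => by rw [weight_zExp, weight_wExp]; exact hq) a
    exact ⟨b, hb, hab⟩

end MonomialMap

theorem aeval_thetaCirc_ypVar_eq_comp {n p q : ℕ} [NeZero n] {ζ : ℂ}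
    (hζ : IsPrimitiveRoot ζ n) (hp : p ∣ n) (hq : q ∣ n) :
    aeval (Sum.elim
      (fun i : Fin (n / p) => thetaCirc p (fun j => ypVar n p ζ (i : ℕ) j))
      (fun i : Fin (n / q) => thetaCirc q (fun j => ypVar n q ζ (i : ℕ) j)))
      = (linearSubst (dftMatrix n ζ)).comp
          (aeval fun s => monomial (fiberExp n p q (n / p) (n / q) s) 1) := by
  refine algHom_ext fun s => ?_
  rcases s with i | j <;>
  simp only [aeval_X, AlgHom.comp_apply, Sum.elim_inl, Sum.elim_inr, fiberExp, monomial_sum_one,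
    map_prod, thetaCirc_ypVar hζ hp, thetaCirc_ypVar hζ hq] <;> rfl

theorem stmt15_general (n p q : ℕ) [NeZero n] [NeZero (n / p)] [NeZero (n / q)]
    (hco : Nat.Coprime p q) (hpq : p * q ∣ n)
    (ζ : ℂ) (hζ : IsPrimitiveRoot ζ n)
    (ρ' : MvPolynomial (Fin (n / p) ⊕ Fin (n / q)) ℂ →ₐ[ℂ] MvPolynomial (ZMod n) ℂ)
    (hρ' : ρ' = aeval (Sum.elim
      (fun i : Fin (n / p) => thetaCirc p (fun j => ypVar n p ζ (i : ℕ) j))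
      (fun i : Fin (n / q) => thetaCirc q (fun j => ypVar n q ζ (i : ℕ) j))))
    (t : ℕ → MvPolynomial (Fin (n / p) ⊕ Fin (n / q)) ℂ)
    (ht : ∀ i : ℕ, t i
      = ∏ j ∈ Finset.range q, X (Sum.inl ((i + (n / (p * q)) * j : ℕ) : Fin (n / p)))
      - ∏ j ∈ Finset.range p, X (Sum.inr ((i + (n / (p * q)) * j : ℕ) : Fin (n / q)))) :
    RingHom.ker ρ'.toRingHom = Ideal.span ((fun i : ℕ => t i) '' Set.Iio (n / (p * q))) := by
  have hp : 0 < p := Nat.pos_of_ne_zero fun h => NeZero.ne n (by simpa [h] using hpq)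
  have hq : 0 < q := Nat.pos_of_ne_zero fun h => NeZero.ne n (by simpa [h] using hpq)
  set N := n / (p * q)
  have hn : N * p * q = n := by rw [mul_assoc]; exact Nat.div_mul_cancel hpq
  have hnp : n / p = N * q := by rw [← hn, mul_right_comm, Nat.mul_div_cancel _ hp]
  have hnq : n / q = N * p := by rw [← hn, Nat.mul_div_cancel _ hq]
  have ht' : (fun i => t i) '' Set.Iio N = (fun r => monomial (zExp N q (n / p) (n / q) r) (1 : ℂ)
      - monomial (wExp N p (n / p) (n / q) r) 1) '' Set.Iio N :=
    Set.image_congr fun i _ => by rw [ht, zExp, wExp, monomial_sum_one, monomial_sum_one]; rfl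
  rw [hρ', aeval_thetaCirc_ypVar_eq_comp hζ (dvd_of_mul_right_dvd hpq) (dvd_of_mul_left_dvd hpq),
    ht', ← ker_aeval_fiberExp hco hp hq hnp hnq hn]
  exact RingHom.ker_comp_of_injective _ (linearSubst_injective (det_dftMatrix_ne_zero hζ).isUnit)

/-- Second fundamental theorem: the kernel of
`ρ' : ℂ[z_0,…,z_{n_p-1}, w_0,…,w_{n_q-1}] → ℂ[x_0,…,x_{n-1}]`,
`z_i ↦ Θ_p(y^(p)_i)`, `w_j ↦ Θ_q(y^(q)_j)`, is generated by
`t_i = ∏_{j<q} z_{i+n_{pq}j} − ∏_{j<p} w_{i+n_{pq}j}` for `0 ≤ i < n_{pq}`. -/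
theorem stmt15 (n p q : ℕ) [NeZero n] [NeZero (n / p)] [NeZero (n / q)]
    (hp : 0 < p) (hq : 0 < q) (hco : Nat.Coprime p q) (hpq : p * q ∣ n)
    (ζ : ℂ) (hζ : IsPrimitiveRoot ζ n)
    (ρ' : MvPolynomial (Fin (n / p) ⊕ Fin (n / q)) ℂ →ₐ[ℂ] MvPolynomial (ZMod n) ℂ)
    (hρ' : ρ' = aeval (Sum.elim
      (fun i : Fin (n / p) => thetaCirc p (fun j => ypVar n p ζ (i : ℕ) j))
      (fun i : Fin (n / q) => thetaCirc q (fun j => ypVar n q ζ (i : ℕ) j))))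
    (t : ℕ → MvPolynomial (Fin (n / p) ⊕ Fin (n / q)) ℂ)
    (ht : ∀ i : ℕ, t i
      = ∏ j ∈ Finset.range q, X (Sum.inl ((i + (n / (p * q)) * j : ℕ) : Fin (n / p)))
      - ∏ j ∈ Finset.range p, X (Sum.inr ((i + (n / (p * q)) * j : ℕ) : Fin (n / q)))) :
    RingHom.ker ρ'.toRingHom = Ideal.span ((fun i : ℕ => t i) '' Set.Iio (n / (p * q))) :=
  stmt15_general n p q hco hpq ζ hζ ρ' hρ' t ht
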